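/- Let D be a triangulated category with a bounded weight structure. Then D is generated, as a triangulated category, by its heart: the smallest full triangulated subcategory of D closed under isomorphisms, shifts, and cones containing the heart D_w^♥ equals D itself, after closing under retracts. -/

import Mathlib

open CategoryTheory CategoryTheory.Limits CategoryTheory.Pretriangulated

variable (C : Type*) [Category C] [Preadditive C] [HasZeroObject C]
  [HasShift C ℤ] [∀ n : ℤ, (shiftFunctor C n).Additive] [Pretriangulated C]

/-- A weight structure on a (pre)triangulated category `C`:
a pair of full subcategories (given as sets of objects) `ge = C_{w≥0}` and `le = C_{w≤0}`,
closed under retracts, with shift-stability, orthogonality and weight decompositions. -/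
structure WeightStructure where
  ge : Set C
  le : Set C
  ge_retract : ∀ (X Y : C), X ∈ ge → (∃ (i : Y ⟶ X) (r : X ⟶ Y), i ≫ r = 𝟙 Y) → Y ∈ ge
  le_retract : ∀ (X Y : C), X ∈ le → (∃ (i : Y ⟶ X) (r : X ⟶ Y), i ≫ r = 𝟙 Y) → Y ∈ le
  ge_shift : ∀ X : C, X ∈ ge → X⟦(1 : ℤ)⟧ ∈ ge
  le_shift : ∀ X : C, X ∈ le → X⟦(-1 : ℤ)⟧ ∈ le
  orth : ∀ (X Y : C), X ∈ le → Y ∈ ge → ∀ f : X ⟶ Y⟦(1 : ℤ)⟧, f = 0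
  decomp : ∀ Z : C, ∃ (X Y : C) (_ : X ∈ le) (_ : Y ∈ ge)
    (f : X ⟶ Z) (g : Z ⟶ Y⟦(1 : ℤ)⟧) (h : Y⟦(1 : ℤ)⟧ ⟶ X⟦(1 : ℤ)⟧),
    Triangle.mk f g h ∈ distTriang C

/-!
Say `Z` has weights `≥ m` (`Z ∈ w.weightGe m`) if `Z⟦-m⟧ ∈ w.ge`, and weights `≤ n` if
`Z⟦-n⟧ ∈ w.le`. Both conditions are closed under extensions, and shifting the weight
decomposition of `Z⟦-n⟧` gives a distinguished triangle `A → Z → B → A⟦1⟧` with `A` of weights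
`≤ n` and `B` of weights `≥ n + 1`. If `Z` has weights in `[m, n + 1]`, then `A` has weights in
`[m, n]` and `B` is a shift of an object of the heart, so induction on the length of the weight
range shows that `S` contains every object with bounded weights.
-/

lemma shift_mem_of_shift_one_mem {D : Type*} [Category D] [HasShift D ℤ] {S : Set D}
    (hiso : ∀ X Y : D, X ∈ S → Nonempty (X ≅ Y) → Y ∈ S)
    (hshift : ∀ X : D, X ∈ S → X⟦(1 : ℤ)⟧ ∈ S ∧ X⟦(-1 : ℤ)⟧ ∈ S) {X : D} (hX : X ∈ S) (n : ℤ) :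
    X⟦n⟧ ∈ S := by
  induction n using Int.induction_on with
  | zero => exact hiso _ _ hX ⟨(shiftFunctorZero D ℤ).symm.app X⟩
  | succ k ih =>
    exact hiso _ _ (hshift _ ih).1 ⟨(shiftFunctorAdd' D (k : ℤ) 1 (k + 1) rfl).symm.app X⟩
  | pred k ih =>
    exact hiso _ _ (hshift _ ih).2
      ⟨(shiftFunctorAdd' D (-k : ℤ) (-1) (-k - 1) (by ring)).symm.app X⟩

section

variable {C}

lemma isomorphic_distinguished_obj₂ (T : Triangle C) (hT : T ∈ distTriang C) {Z : C}
    (e : T.obj₂ ≅ Z) :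
    Triangle.mk (T.mor₁ ≫ e.hom) (e.inv ≫ T.mor₂) T.mor₃ ∈ distTriang C := by
  refine isomorphic_distinguished _ hT _
    (Triangle.isoMk _ _ (Iso.refl _) e.symm (Iso.refl _) ?_ ?_ ?_)
  all_goals dsimp [Triangle.mk]
  all_goals simp

variable {S : Set C}

lemma obj₂_mem_of_distTriang (hshift : ∀ X : C, X ∈ S → X⟦(1 : ℤ)⟧ ∈ S ∧ X⟦(-1 : ℤ)⟧ ∈ S)
    (hcone : ∀ T : Triangle C, T ∈ distTriang C → T.obj₁ ∈ S → T.obj₂ ∈ S → T.obj₃ ∈ S)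
    (T : Triangle C) (hT : T ∈ distTriang C) (h₁ : T.obj₁ ∈ S) (h₃ : T.obj₃ ∈ S) : T.obj₂ ∈ S :=
  hcone _ (inv_rot_of_distTriang T hT) (hshift _ h₃).2 h₁

end

namespace WeightStructure

variable {C}
variable (w : WeightStructure C)

lemma mem_ge_of_retract {X Y : C} (h : Retract X Y) (hY : Y ∈ w.ge) : X ∈ w.ge :=
  w.ge_retract Y X hY ⟨h.i, h.r, h.retract⟩

lemma mem_le_of_retract {X Y : C} (h : Retract X Y) (hY : Y ∈ w.le) : X ∈ w.le :=
  w.le_retract Y X hY ⟨h.i, h.r, h.retract⟩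

lemma mem_ge_of_iso {X Y : C} (e : X ≅ Y) (hX : X ∈ w.ge) : Y ∈ w.ge :=
  w.mem_ge_of_retract (Retract.ofIso e.symm) hX

lemma mem_le_of_iso {X Y : C} (e : X ≅ Y) (hX : X ∈ w.le) : Y ∈ w.le :=
  w.mem_le_of_retract (Retract.ofIso e.symm) hX

/-- The weight decomposition `X → T.obj₂ → Y⟦1⟧` splits, so `T.obj₂` is a retract of `X`. -/
lemma le_of_distTriang (T : Triangle C) (hT : T ∈ distTriang C)
    (h₁ : T.obj₁ ∈ w.le) (h₃ : T.obj₃ ∈ w.le) : T.obj₂ ∈ w.le := by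
  obtain ⟨X, Y, hX, hY, f, g, h, hD⟩ := w.decomp T.obj₂
  have hg : g = 0 := by
    obtain ⟨g', hg'⟩ := Triangle.yoneda_exact₂ T hT g (w.orth _ _ h₁ hY _)
    rw [hg', w.orth _ _ h₃ hY g', comp_zero]
  obtain ⟨r, hr⟩ := Triangle.coyoneda_exact₂ _ hD (𝟙 T.obj₂) (by rw [hg]; exact comp_zero)
  exact w.mem_le_of_retract ⟨r, f, hr.symm⟩ hX

/-- The weight decomposition `X → T.obj₂⟦1⟧ → Y⟦1⟧` splits, since orthogonality applies to the
shifted triangle `T⟦1⟧`; shifting back makes `T.obj₂` a retract of `Y`. -/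
lemma ge_of_distTriang (T : Triangle C) (hT : T ∈ distTriang C)
    (h₁ : T.obj₁ ∈ w.ge) (h₃ : T.obj₃ ∈ w.ge) : T.obj₂ ∈ w.ge := by
  obtain ⟨X, Y, hX, hY, f, g, h, hD⟩ := w.decomp (T.obj₂⟦(1 : ℤ)⟧)
  let T' := (shiftFunctor (Triangle C) (1 : ℤ)).obj T
  have hT' : T' ∈ distTriang C := Triangle.shift_distinguished T hT 1
  have hf : f = 0 := by
    obtain ⟨φ, hφ⟩ := Triangle.coyoneda_exact₂ T' hT' f (w.orth _ _ hX h₃ _)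
    rw [hφ, w.orth _ _ hX h₁ φ]; exact zero_comp
  obtain ⟨r, hr⟩ := Triangle.yoneda_exact₂ _ hD (𝟙 _) (by rw [hf]; exact zero_comp)
  let e : Retract (T.obj₂⟦(1 : ℤ)⟧) (Y⟦(1 : ℤ)⟧) := ⟨g, r, hr.symm⟩
  exact w.mem_ge_of_retract ((Retract.ofIso (shiftShiftNeg T.obj₂ (1 : ℤ)).symm).trans
    ((e.map (shiftFunctor C (-1 : ℤ))).trans (Retract.ofIso (shiftShiftNeg Y (1 : ℤ))))) hY

def weightGe (n : ℤ) : Set C := {Z | Z⟦-n⟧ ∈ w.ge}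

def weightLe (n : ℤ) : Set C := {Z | Z⟦-n⟧ ∈ w.le}

lemma mem_weightGe_zero {X : C} (hX : X ∈ w.ge) : X ∈ w.weightGe 0 :=
  w.mem_ge_of_iso ((shiftFunctorZero' C (-0 : ℤ) neg_zero).app X).symm hX

lemma mem_weightLe_zero {X : C} (hX : X ∈ w.le) : X ∈ w.weightLe 0 :=
  w.mem_le_of_iso ((shiftFunctorZero' C (-0 : ℤ) neg_zero).app X).symm hX

lemma shift_mem_weightGe {Z : C} {a : ℤ} (hZ : Z ∈ w.weightGe a) (b c : ℤ) (h : a + b = c) :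
    Z⟦b⟧ ∈ w.weightGe c :=
  w.mem_ge_of_iso ((shiftFunctorAdd' C b (-c) (-a) (by omega)).app Z) hZ

lemma shift_mem_weightLe {Z : C} {a : ℤ} (hZ : Z ∈ w.weightLe a) (b c : ℤ) (h : a + b = c) :
    Z⟦b⟧ ∈ w.weightLe c :=
  w.mem_le_of_iso ((shiftFunctorAdd' C b (-c) (-a) (by omega)).app Z) hZ

lemma weightGe_antitone : Antitone w.weightGe :=
  antitone_int_of_succ_le fun n _ hZ =>
    w.mem_ge_of_iso ((shiftFunctorAdd' C (-(n + 1)) 1 (-n) (by omega)).app _).symm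
      (w.ge_shift _ hZ)

lemma weightLe_monotone : Monotone w.weightLe :=
  monotone_int_of_le_succ fun n _ hZ =>
    w.mem_le_of_iso ((shiftFunctorAdd' C (-n) (-1) (-(n + 1)) (by omega)).app _).symm
      (w.le_shift _ hZ)

lemma weightGe_of_distTriang {n : ℤ} (T : Triangle C) (hT : T ∈ distTriang C)
    (h₁ : T.obj₁ ∈ w.weightGe n) (h₃ : T.obj₃ ∈ w.weightGe n) : T.obj₂ ∈ w.weightGe n :=
  w.ge_of_distTriang _ (Triangle.shift_distinguished T hT (-n)) h₁ h₃

lemma weightLe_of_distTriang {n : ℤ} (T : Triangle C) (hT : T ∈ distTriang C)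
    (h₁ : T.obj₁ ∈ w.weightLe n) (h₃ : T.obj₃ ∈ w.weightLe n) : T.obj₂ ∈ w.weightLe n :=
  w.le_of_distTriang _ (Triangle.shift_distinguished T hT (-n)) h₁ h₃

lemma exists_distTriang_weightLe_weightGe (Z : C) (n : ℤ) :
    ∃ (A B : C) (f : A ⟶ Z) (g : Z ⟶ B) (h : B ⟶ A⟦(1 : ℤ)⟧),
      Triangle.mk f g h ∈ distTriang C ∧ A ∈ w.weightLe n ∧ B ∈ w.weightGe (n + 1) := by
  obtain ⟨X, Y, hX, hY, f, g, h, hD⟩ := w.decomp (Z⟦-n⟧)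
  let T := (shiftFunctor (Triangle C) n).obj (Triangle.mk f g h)
  have hT : T ∈ distTriang C := Triangle.shift_distinguished _ hD n
  let e : Z⟦-n⟧⟦n⟧ ≅ Z := shiftNegShift Z n
  refine ⟨_, _, T.mor₁ ≫ e.hom, e.inv ≫ T.mor₂, T.mor₃, ?_, ?_, ?_⟩
  · exact isomorphic_distinguished_obj₂ T hT e
  · exact w.shift_mem_weightLe (w.mem_weightLe_zero hX) n n (zero_add n)
  · exact w.shift_mem_weightGe (w.shift_mem_weightGe (w.mem_weightGe_zero hY) 1 1 rfl) n (n + 1)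
      (add_comm 1 n)

variable {S : Set C}

lemma mem_of_mem_weightGe_of_mem_weightLe_self (hheart : w.ge ∩ w.le ⊆ S)
    (hiso : ∀ X Y : C, X ∈ S → Nonempty (X ≅ Y) → Y ∈ S)
    (hshift : ∀ X : C, X ∈ S → X⟦(1 : ℤ)⟧ ∈ S ∧ X⟦(-1 : ℤ)⟧ ∈ S)
    {Z : C} {n : ℤ} (hge : Z ∈ w.weightGe n) (hle : Z ∈ w.weightLe n) : Z ∈ S :=
  hiso _ _ (shift_mem_of_shift_one_mem hiso hshift (hheart ⟨hge, hle⟩) n) ⟨shiftNegShift Z n⟩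

lemma mem_of_mem_weightGe_of_mem_weightLe (hheart : w.ge ∩ w.le ⊆ S)
    (hiso : ∀ X Y : C, X ∈ S → Nonempty (X ≅ Y) → Y ∈ S)
    (hshift : ∀ X : C, X ∈ S → X⟦(1 : ℤ)⟧ ∈ S ∧ X⟦(-1 : ℤ)⟧ ∈ S)
    (hcone : ∀ T : Triangle C, T ∈ distTriang C → T.obj₁ ∈ S → T.obj₂ ∈ S → T.obj₃ ∈ S)
    {Z : C} {m n : ℤ} (hge : Z ∈ w.weightGe m) (hle : Z ∈ w.weightLe n) : Z ∈ S := by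
  suffices key : ∀ k ≥ m, ∀ Z ∈ w.weightGe m, Z ∈ w.weightLe k → Z ∈ S from
    key _ (le_max_left m n) Z hge (w.weightLe_monotone (le_max_right m n) hle)
  intro k hmk
  induction k, hmk using Int.leInduction with
  | base => exact fun Z hge hle ↦
      w.mem_of_mem_weightGe_of_mem_weightLe_self hheart hiso hshift hge hle
  | succ n hmn ih =>
    intro Z hge hle
    obtain ⟨A, B, f, g, h, hT, hA, hB⟩ := w.exists_distTriang_weightLe_weightGe Z n
    have hAge : A ∈ w.weightGe m :=
      w.weightGe_of_distTriang _ (inv_rot_of_distTriang _ hT)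
        (w.weightGe_antitone hmn (w.shift_mem_weightGe hB (-1) n (by ring))) hge
    have hBle : B ∈ w.weightLe (n + 1) :=
      w.weightLe_of_distTriang _ (rot_of_distTriang _ hT) hle
        (w.shift_mem_weightLe hA 1 (n + 1) rfl)
    exact obj₂_mem_of_distTriang hshift hcone _ hT (ih A hAge hA)
      (w.mem_of_mem_weightGe_of_mem_weightLe_self hheart hiso hshift hB hBle)

end WeightStructure

theorem weight_bounded_generated_by_heart (w : WeightStructure C)
    (hbounded : ∀ Z : C, ∃ m n : ℤ, Z⟦-m⟧ ∈ w.ge ∧ Z⟦-n⟧ ∈ w.le)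
    (S : Set C)
    (hheart : w.ge ∩ w.le ⊆ S)
    (hiso : ∀ X Y : C, X ∈ S → Nonempty (X ≅ Y) → Y ∈ S)
    (hshift : ∀ X : C, X ∈ S → X⟦(1 : ℤ)⟧ ∈ S ∧ X⟦(-1 : ℤ)⟧ ∈ S)
    (hcone : ∀ T : Triangle C, T ∈ (distTriang C) →
      T.obj₁ ∈ S → T.obj₂ ∈ S → T.obj₃ ∈ S) :
    S = Set.univ :=
  Set.eq_univ_of_forall fun Z =>
    let ⟨_, _, hge, hle⟩ := hbounded Z
    w.mem_of_mem_weightGe_of_mem_weightLe hheart hiso hshift hcone hge hle
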